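/- arXiv:2008.00694 — 4 statements merged into one kernel-verified Lean document; each statement's English description precedes it below -/
import Mathlib

section
/- Let L ∈ ℝ^{n×n} be the graph Laplacian of a strongly connected weighted directed graph on n nodes, let w = (w_1,…,w_n) be a vector with all entries strictly positive satisfying wᵀL = 0, and set W = diag(w_1,…,w_n). Then the symmetric matrix WL + LᵀW is positive semidefinite. -/
/-!
With `M = W L + Lᵀ W`: `M` is symmetric, its off-diagonal entries `-(wᵢ aᵢⱼ + wⱼ aⱼᵢ)` are
nonpositive, and its row sums vanish, since `M 1 = W (L 1) + Lᵀ w` with `L 1 = 0` for a Laplacian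
and `Lᵀ w = 0` by hypothesis. Hence `M` is weakly diagonally dominant with nonnegative diagonal,
and Gershgorin's circle theorem puts all its (real) eigenvalues in `[0, ∞)`.
-/

open Matrix

namespace Matrix

variable {ι : Type*} [Fintype ι] [DecidableEq ι]

theorem IsHermitian.posSemidef_of_sum_abs_offDiag_le {A : Matrix ι ι ℝ} (hA : A.IsHermitian)
    (hdom : ∀ i, ∑ j ∈ Finset.univ.erase i, |A i j| ≤ A i i) : A.PosSemidef := by
  refine hA.posSemidef_iff_eigenvalues_nonneg.mpr fun i => ?_
  change 0 ≤ hA.eigenvalues i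
  have hμ : Module.End.HasEigenvalue (toLin' A) (hA.eigenvalues i) := by
    rw [Module.End.hasEigenvalue_iff_mem_spectrum, spectrum_toLin']
    exact hA.eigenvalues_mem_spectrum_real i
  obtain ⟨k, hk⟩ := eigenvalue_mem_ball hμ
  simp only [Metric.mem_closedBall, Real.dist_eq, Real.norm_eq_abs] at hk
  linarith [(abs_le.mp hk).1, hdom k]

theorem IsHermitian.posSemidef_of_offDiag_nonpos_of_mulVec_one_nonneg {A : Matrix ι ι ℝ}
    (hA : A.IsHermitian) (hoff : ∀ i j, i ≠ j → A i j ≤ 0) (hrow : 0 ≤ A *ᵥ 1) :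
    A.PosSemidef := by
  refine hA.posSemidef_of_sum_abs_offDiag_le fun i => ?_
  have hsum : A i i + ∑ j ∈ Finset.univ.erase i, A i j = ∑ j, A i j :=
    Finset.add_sum_erase _ _ (Finset.mem_univ i)
  have hi : 0 ≤ ∑ j, A i j := by
    simpa only [mulVec, dotProduct, Pi.one_apply, mul_one, Pi.zero_apply] using hrow i
  calc ∑ j ∈ Finset.univ.erase i, |A i j| = -∑ j ∈ Finset.univ.erase i, A i j := by
        rw [← Finset.sum_neg_distrib]
        exact Finset.sum_congr rfl fun j hj =>
          abs_of_nonpos (hoff i j (Finset.ne_of_mem_erase hj).symm)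
    _ ≤ A i i := by linarith

end Matrix

theorem laplacian_mulVec_one {ι : Type*} [Fintype ι] [DecidableEq ι] (a : ι → ι → ℝ)
    (L : Matrix ι ι ℝ) (hdiag : ∀ i, L i i = ∑ j ∈ Finset.univ.erase i, a i j)
    (hoff : ∀ i j, i ≠ j → L i j = -a i j) : L *ᵥ 1 = 0 := by
  ext i
  have hrest : ∑ j ∈ Finset.univ.erase i, L i j = -L i i := by
    rw [hdiag, ← Finset.sum_neg_distrib]
    exact Finset.sum_congr rfl fun j hj => hoff i j (Finset.ne_of_mem_erase hj).symm
  simp only [mulVec, dotProduct, Pi.one_apply, mul_one, Pi.zero_apply]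
  rw [← Finset.add_sum_erase _ _ (Finset.mem_univ i), hrest, add_neg_cancel]

theorem laplacian_WL_add_LtW_posSemidef_general
    (n : ℕ) (a : Fin n → Fin n → ℝ) (L : Matrix (Fin n) (Fin n) ℝ)
    (hnn : ∀ i j, i ≠ j → 0 ≤ a i j)
    (hdiag : ∀ i, L i i = ∑ j ∈ Finset.univ.erase i, a i j)
    (hoff : ∀ i j, i ≠ j → L i j = -a i j)
    (w : Fin n → ℝ) (hw : ∀ i, 0 < w i) (hwL : Matrix.vecMul w L = 0) :
    (Matrix.diagonal w * L + Lᵀ * Matrix.diagonal w).PosSemidef := by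
  have hL : ∀ i j, i ≠ j → L i j ≤ 0 := fun i j hij => by
    rw [hoff i j hij]
    exact neg_nonpos.mpr (hnn i j hij)
  have hw1 : diagonal w *ᵥ 1 = w := by
    ext i
    simp [mulVec_diagonal]
  refine IsHermitian.posSemidef_of_offDiag_nonpos_of_mulVec_one_nonneg ?_ (fun i j hij => ?_) ?_
  · simp [IsHermitian, conjTranspose_eq_transpose_of_trivial, transpose_mul, add_comm]
  · simp only [Matrix.add_apply, diagonal_mul, mul_diagonal, transpose_apply]
    exact add_nonpos (mul_nonpos_of_nonneg_of_nonpos (hw i).le (hL i j hij))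
      (mul_nonpos_of_nonpos_of_nonneg (hL j i hij.symm) (hw j).le)
  · rw [add_mulVec, ← mulVec_mulVec, ← mulVec_mulVec, laplacian_mulVec_one a L hdiag hoff, hw1,
      mulVec_transpose, hwL, mulVec_zero, zero_add]

/-- **Lemma 1 (second part).** If `L` is the graph Laplacian of a strongly connected
weighted directed graph on `n` nodes, `w` is a vector with all entries strictly positive
satisfying `wᵀ L = 0`, and `W = diag w`, then the symmetric matrix `W L + Lᵀ W` is
positive semidefinite. -/
theorem laplacian_WL_add_LtW_posSemidef
    (n : ℕ) (a : Fin n → Fin n → ℝ) (L : Matrix (Fin n) (Fin n) ℝ)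
    (hnn : ∀ i j, i ≠ j → 0 ≤ a i j)
    (hdiag : ∀ i, L i i = ∑ j ∈ Finset.univ.erase i, a i j)
    (hoff : ∀ i j, i ≠ j → L i j = -a i j)
    (hsc : ∀ i j : Fin n, i ≠ j → Relation.TransGen (fun u v => 0 < a u v) i j)
    (w : Fin n → ℝ) (hw : ∀ i, 0 < w i) (hwL : Matrix.vecMul w L = 0) :
    (Matrix.diagonal w * L + Lᵀ * Matrix.diagonal w).PosSemidef :=
  laplacian_WL_add_LtW_posSemidef_general n a L hnn hdiag hoff w hw hwL
end

section
/- Let L ∈ ℝ^{n×n} be the graph Laplacian of a strongly connected weighted directed graph on n nodes, let w be a vector with all entries strictly positive satisfying wᵀL = 0, and set W = diag(w). Then for x ∈ ℝⁿ one has xᵀ(WL + LᵀW)x = 0 if and only if x is a scalar multiple of the all-ones vector 1_n; equivalently, the kernel of the positive semidefinite matrix WL + LᵀW is exactly span{1_n}. -/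
open Matrix

/-- For the graph Laplacian `L` of a strongly connected weighted directed graph, a positive
left null vector `w` of `L`, and `W = diag w`, the quadratic form of the positive
semidefinite matrix `W L + Lᵀ W` vanishes at `x` if and only if `x` is a scalar multiple
of the all-ones vector; equivalently, the kernel of `W L + Lᵀ W` is exactly `span {1ₙ}`. -/
theorem laplacian_WL_add_LtW_kernel_eq_span_ones
    (n : ℕ) (a : Fin n → Fin n → ℝ) (L : Matrix (Fin n) (Fin n) ℝ)
    (hnn : ∀ i j, i ≠ j → 0 ≤ a i j)
    (hdiag : ∀ i, L i i = ∑ j ∈ Finset.univ.erase i, a i j)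
    (hoff : ∀ i j, i ≠ j → L i j = -a i j)
    (hsc : ∀ i j : Fin n, i ≠ j → Relation.TransGen (fun u v => 0 < a u v) i j)
    (w : Fin n → ℝ) (hw : ∀ i, 0 < w i) (hwL : Matrix.vecMul w L = 0) :
    ∀ x : Fin n → ℝ,
      x ⬝ᵥ ((Matrix.diagonal w * L + Lᵀ * Matrix.diagonal w) *ᵥ x) = 0 ↔
        ∃ c : ℝ, x = fun _ => c := by
  intro x
  -- swapping double sums over off-diagonal pairs
  have hswap : ∀ f : Fin n → Fin n → ℝ,
      ∑ i, ∑ j ∈ Finset.univ.erase i, f i j = ∑ j, ∑ i ∈ Finset.univ.erase j, f i j := by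
    intro f
    have key : ∀ g : Fin n → Fin n → ℝ,
        (∑ i, ∑ j ∈ Finset.univ.erase i, g i j)
          = ∑ i, ∑ j, if j = i then 0 else g i j := by
      intro g
      refine Finset.sum_congr rfl fun i _ => ?_
      refine Eq.trans ?_ (Finset.sum_erase (a := i) Finset.univ (by simp))
      refine Finset.sum_congr rfl fun j hj => ?_
      simp [(Finset.mem_erase.mp hj).1]
    rw [key f, key (fun j i => f i j), Finset.sum_comm]
    exact Finset.sum_congr rfl fun i _ => Finset.sum_congr rfl fun j _ =>
      if_congr eq_comm rfl rfl
  -- the column-sum identity from wᵀ L = 0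
  have hcol : ∀ j, ∑ i ∈ Finset.univ.erase j, w i * a i j
      = w j * ∑ k ∈ Finset.univ.erase j, a j k := by
    intro j
    have h0 : ∑ i, w i * L i j = 0 := by
      have := congrFun hwL j
      simpa [Matrix.vecMul, dotProduct] using this
    rw [← Finset.add_sum_erase Finset.univ (fun i => w i * L i j) (Finset.mem_univ j)] at h0
    have h1 : ∑ i ∈ Finset.univ.erase j, w i * L i j
        = -∑ i ∈ Finset.univ.erase j, w i * a i j := by
      rw [← Finset.sum_neg_distrib]
      refine Finset.sum_congr rfl fun i hi => ?_
      rw [hoff i j (Finset.mem_erase.mp hi).1]; ring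
    rw [h1, hdiag j] at h0
    linarith
  -- D1 = D2
  have hD : ∑ i, ∑ j ∈ Finset.univ.erase i, w i * a i j * x j ^ 2
      = ∑ i, ∑ j ∈ Finset.univ.erase i, w i * a i j * x i ^ 2 := by
    rw [hswap (fun i j => w i * a i j * x j ^ 2)]
    refine Finset.sum_congr rfl fun j _ => ?_
    have h2 : ∑ i ∈ Finset.univ.erase j, w i * a i j * x j ^ 2
        = (∑ i ∈ Finset.univ.erase j, w i * a i j) * x j ^ 2 := by
      rw [Finset.sum_mul]
    rw [h2, hcol j, Finset.mul_sum, Finset.sum_mul]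
  -- the quadratic form equals the weighted sum of squared differences
  have key : x ⬝ᵥ ((Matrix.diagonal w * L + Lᵀ * Matrix.diagonal w) *ᵥ x)
      = ∑ i, ∑ j ∈ Finset.univ.erase i, w i * a i j * (x i - x j) ^ 2 := by
    have e0 : x ⬝ᵥ ((Matrix.diagonal w * L + Lᵀ * Matrix.diagonal w) *ᵥ x)
        = ∑ i, ∑ j, (w i * L i j * x i * x j + w j * L j i * x j * x i) := by
      simp only [dotProduct, Matrix.mulVec, Matrix.add_apply, Matrix.diagonal_mul,
        Matrix.mul_diagonal, Matrix.transpose_apply, Finset.mul_sum]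
      refine Finset.sum_congr rfl fun i _ => Finset.sum_congr rfl fun j _ => ?_
      ring
    have e1 : x ⬝ᵥ ((Matrix.diagonal w * L + Lᵀ * Matrix.diagonal w) *ᵥ x)
        = 2 * ∑ i, ∑ j, w i * L i j * x i * x j := by
      rw [e0]
      have hc : ∑ i, ∑ j, w j * L j i * x j * x i = ∑ i, ∑ j, w i * L i j * x i * x j :=
        Finset.sum_comm
      simp only [Finset.sum_add_distrib, hc]
      try ring
    -- split off the diagonal
    have e2 : ∑ i, ∑ j, w i * L i j * x i * x j
        = ∑ i, ∑ j ∈ Finset.univ.erase i,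
            (w i * a i j * x i * x i - w i * a i j * x i * x j) := by
      refine Finset.sum_congr rfl fun i _ => ?_
      rw [← Finset.add_sum_erase Finset.univ (fun j => w i * L i j * x i * x j)
        (Finset.mem_univ i)]
      have hA : w i * L i i * x i * x i
          = ∑ j ∈ Finset.univ.erase i, w i * a i j * x i * x i := by
        rw [hdiag i, Finset.mul_sum, Finset.sum_mul, Finset.sum_mul]
      have hB : ∑ j ∈ Finset.univ.erase i, w i * L i j * x i * x j
          = ∑ j ∈ Finset.univ.erase i, -(w i * a i j * x i * x j) := by
        refine Finset.sum_congr rfl fun j hj => ?_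
        have hij : i ≠ j := fun h => (Finset.mem_erase.mp hj).1 h.symm
        rw [hoff i j hij]; ring
      rw [hA, hB, Finset.sum_neg_distrib, Finset.sum_sub_distrib]
      ring
    rw [e1, e2]
    -- now use hD and pointwise algebra
    have e3 : ∀ i j : Fin n, w i * a i j * (x i - x j) ^ 2
        = 2 * (w i * a i j * x i * x i - w i * a i j * x i * x j)
          - w i * a i j * x i ^ 2 + w i * a i j * x j ^ 2 := by
      intro i j; ring
    calc 2 * ∑ i, ∑ j ∈ Finset.univ.erase i,
            (w i * a i j * x i * x i - w i * a i j * x i * x j)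
        = (∑ i, ∑ j ∈ Finset.univ.erase i,
            2 * (w i * a i j * x i * x i - w i * a i j * x i * x j))
          - (∑ i, ∑ j ∈ Finset.univ.erase i, w i * a i j * x i ^ 2)
          + (∑ i, ∑ j ∈ Finset.univ.erase i, w i * a i j * x j ^ 2) := by
          rw [hD]
          simp only [Finset.mul_sum]
          ring
      _ = ∑ i, ∑ j ∈ Finset.univ.erase i, w i * a i j * (x i - x j) ^ 2 := by
          simp only [← Finset.sum_sub_distrib, ← Finset.sum_add_distrib]
          refine Finset.sum_congr rfl fun i _ => Finset.sum_congr rfl fun j _ => (e3 i j).symm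
  rw [key]
  constructor
  · intro h0
    have hterm : ∀ i : Fin n, ∀ j ∈ Finset.univ.erase i,
        w i * a i j * (x i - x j) ^ 2 = 0 := by
      have houter := (Finset.sum_eq_zero_iff_of_nonneg (fun i _ =>
        Finset.sum_nonneg fun j hj => by
          have hij : j ≠ i := (Finset.mem_erase.mp hj).1
          exact mul_nonneg (mul_nonneg (hw i).le (hnn i j (Ne.symm hij))) (sq_nonneg _))).mp h0
      intro i j hj
      have hij : j ≠ i := (Finset.mem_erase.mp hj).1
      have hin := houter i (Finset.mem_univ i)
      exact (Finset.sum_eq_zero_iff_of_nonneg (fun j hj => by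
        have hij : j ≠ i := (Finset.mem_erase.mp hj).1
        exact mul_nonneg (mul_nonneg (hw i).le (hnn i j (Ne.symm hij))) (sq_nonneg _))).mp hin j hj
    have step : ∀ u v : Fin n, 0 < a u v → x u = x v := by
      intro u v huv
      by_cases h : u = v
      · rw [h]
      · have hz := hterm u v (Finset.mem_erase.mpr ⟨fun hv => h hv.symm, Finset.mem_univ v⟩)
        have hpos : 0 < w u * a u v := mul_pos (hw u) huv
        have h2 : (x u - x v) ^ 2 = 0 := by
          rcases mul_eq_zero.mp hz with h' | h'
          · exact absurd h' (ne_of_gt hpos)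
          · exact h'
        have h3 : x u - x v = 0 := by
          have := sq_eq_zero_iff.mp h2
          linarith
        linarith
    have hxeq : ∀ u v : Fin n, Relation.TransGen (fun p q => 0 < a p q) u v → x u = x v := by
      intro u v h
      induction h with
      | single h => exact step _ _ h
      | tail _ h ih => exact ih.trans (step _ _ h)
    rcases Nat.eq_zero_or_pos n with hn | hn
    · exact ⟨0, funext fun i => absurd i.isLt (by omega)⟩
    · refine ⟨x ⟨0, hn⟩, funext fun j => ?_⟩
      by_cases hj : j = ⟨0, hn⟩
      · rw [hj]
      · exact (hxeq _ _ (hsc ⟨0, hn⟩ j (Ne.symm hj))).symm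
  · rintro ⟨c, rfl⟩
    refine Finset.sum_eq_zero fun i _ => Finset.sum_eq_zero fun j _ => by ring
end

section
/- Let L ∈ ℝ^{n×n} be the graph Laplacian of a strongly connected weighted directed graph on n nodes, let w be a vector with all entries strictly positive satisfying wᵀL = 0, and set W = diag(w). Let G = diag(g_1,…,g_n) with g_i ≥ 0 for all i and g_i > 0 for at least one i. Then the symmetric matrix W(L+G) + (L+G)ᵀW is positive definite. -/
/-!
With `A = L + G`, the quadratic form of `W A + Aᵀ W` is `2 xᵀ W A x`. Since the rows of `L` sum
to zero and `wᵀ L = 0`, expanding `(x i - x j)²` gives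
`2 xᵀ W L x = ∑ i j, w i (-L i j) (x i - x j)²`, so the form equals
`∑ i ≠ j, w i a i j (x i - x j)² + 2 ∑ i, w i g i (x i)²`, a sum of nonnegative terms.
If it vanishes, `x` is constant along every edge, hence constant by strong connectivity, and
it vanishes at a pinned node, so `x = 0`.
-/

namespace Matrix

variable {ι : Type*} [Fintype ι]

lemma dotProduct_add_transpose_mulVec {R : Type*} [CommSemiring R] (B : Matrix ι ι R)
    (x : ι → R) : x ⬝ᵥ (B + Bᵀ) *ᵥ x = 2 * (x ⬝ᵥ B *ᵥ x) := by
  rw [add_mulVec, dotProduct_add, dotProduct_mulVec x Bᵀ, vecMul_transpose, dotProduct_comm,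
    two_mul]

variable [DecidableEq ι]

lemma dotProduct_diagonal_mulVec {R : Type*} [CommSemiring R] (d x : ι → R) :
    x ⬝ᵥ diagonal d *ᵥ x = ∑ i, d i * x i ^ 2 := by
  simp only [dotProduct, mulVec_diagonal]
  exact Finset.sum_congr rfl fun i _ => by ring

lemma two_mul_dotProduct_diagonal_mul_mulVec {R : Type*} [CommRing R] (L : Matrix ι ι R)
    {w : ι → R} (hrow : ∀ i, ∑ j, L i j = 0) (hwL : w ᵥ* L = 0) (x : ι → R) :
    2 * (x ⬝ᵥ (diagonal w * L) *ᵥ x) = -∑ i, ∑ j, w i * L i j * (x i - x j) ^ 2 := by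
  have hleft : ∑ i, ∑ j, w i * L i j * x i ^ 2 = 0 := by
    simp only [← Finset.sum_mul, ← Finset.mul_sum, hrow, mul_zero, zero_mul,
      Finset.sum_const_zero]
  have hright : ∑ i, ∑ j, w i * L i j * x j ^ 2 = 0 := by
    rw [Finset.sum_comm]
    simp only [← Finset.sum_mul]
    exact Finset.sum_eq_zero fun j _ => by
      rw [show ∑ i, w i * L i j = (w ᵥ* L) j from rfl, hwL, Pi.zero_apply, zero_mul]
  have hexpand : ∑ i, ∑ j, w i * L i j * (x i - x j) ^ 2 = ∑ i, ∑ j, w i * L i j * x i ^ 2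
      - 2 * ∑ i, ∑ j, x i * (w i * L i j * x j) + ∑ i, ∑ j, w i * L i j * x j ^ 2 := by
    simp only [Finset.mul_sum, ← Finset.sum_sub_distrib, ← Finset.sum_add_distrib]
    exact Finset.sum_congr rfl fun i _ => Finset.sum_congr rfl fun j _ => by ring
  rw [hexpand, hleft, hright]
  simp only [dotProduct, mulVec, diagonal_mul, Finset.mul_sum]
  ring

lemma dotProduct_diagonal_mul_add_transpose_mul_diagonal_mulVec {R : Type*} [CommRing R]
    (L : Matrix ι ι R) {w : ι → R} (g : ι → R) (hrow : ∀ i, ∑ j, L i j = 0)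
    (hwL : w ᵥ* L = 0) (x : ι → R) :
    x ⬝ᵥ (diagonal w * (L + diagonal g) + (L + diagonal g)ᵀ * diagonal w) *ᵥ x
      = ∑ i, ∑ j, w i * -L i j * (x i - x j) ^ 2 + 2 * ∑ i, w i * g i * x i ^ 2 := by
  have hsymm : (L + diagonal g)ᵀ * diagonal w = (diagonal w * (L + diagonal g))ᵀ := by
    rw [transpose_mul, diagonal_transpose]
  rw [hsymm, dotProduct_add_transpose_mulVec, mul_add, add_mulVec, dotProduct_add, mul_add,
    two_mul_dotProduct_diagonal_mul_mulVec L hrow hwL, diagonal_mul_diagonal,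
    dotProduct_diagonal_mulVec]
  simp only [neg_mul, mul_neg, Finset.sum_neg_distrib]

end Matrix

open Matrix

lemma eq_zero_of_reflTransGen {ι : Type*} {r : ι → ι → Prop} {g x : ι → ℝ}
    (hedge : ∀ u v, r u v → x u = x v) (hpin : ∀ j, 0 < g j → x j = 0)
    (hreach : ∀ i, ∃ j, 0 < g j ∧ Relation.ReflTransGen r i j) : x = 0 := by
  funext i
  obtain ⟨j, hgj, hij⟩ := hreach i
  have hconst : x i = x j := by
    clear hgj
    induction hij with
    | refl => rfl
    | tail _ huv ih => exact ih.trans (hedge _ _ huv)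
  rw [hconst, hpin j hgj, Pi.zero_apply]

theorem posDef_diagonal_mul_add_transpose_mul_diagonal {ι : Type*} [Fintype ι]
    [DecidableEq ι] (L : Matrix ι ι ℝ) {w g : ι → ℝ}
    (hoffDiag : ∀ i j, i ≠ j → L i j ≤ 0) (hrow : ∀ i, ∑ j, L i j = 0)
    (hwL : w ᵥ* L = 0) (hw : ∀ i, 0 < w i) (hg : ∀ i, 0 ≤ g i)
    (hreach : ∀ i, ∃ j, 0 < g j ∧ Relation.ReflTransGen (fun u v => L u v < 0) i j) :
    (diagonal w * (L + diagonal g) + (L + diagonal g)ᵀ * diagonal w).PosDef := by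
  rw [posDef_iff_dotProduct_mulVec]
  refine ⟨?_, fun x hx => ?_⟩
  · rw [IsHermitian, conjTranspose_eq_transpose_of_trivial, transpose_add, transpose_mul,
      transpose_mul, transpose_transpose, diagonal_transpose, add_comm]
  rw [star_trivial, dotProduct_diagonal_mul_add_transpose_mul_diagonal_mulVec L g hrow hwL]
  have hedge_nonneg : ∀ i j, 0 ≤ w i * -L i j * (x i - x j) ^ 2 := by
    intro i j
    rcases eq_or_ne i j with rfl | hij
    · simp
    · exact mul_nonneg (mul_nonneg (hw i).le (neg_nonneg.mpr (hoffDiag i j hij))) (sq_nonneg _)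
  have hpin_nonneg : ∀ i, 0 ≤ w i * g i * x i ^ 2 := fun i =>
    mul_nonneg (mul_nonneg (hw i).le (hg i)) (sq_nonneg _)
  have hedges := Finset.sum_nonneg fun i (_ : i ∈ Finset.univ) =>
    Finset.sum_nonneg fun j (_ : j ∈ Finset.univ) => hedge_nonneg i j
  have hpins := Finset.sum_nonneg fun i (_ : i ∈ Finset.univ) => hpin_nonneg i
  obtain ⟨u, v, huv, hxuv⟩ | ⟨j, hgj, hxj⟩ :
      (∃ u v, L u v < 0 ∧ x u ≠ x v) ∨ ∃ j, 0 < g j ∧ x j ≠ 0 := by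
    by_contra! h
    exact hx (eq_zero_of_reflTransGen h.1 h.2 hreach)
  · have hterm : 0 < w u * -L u v * (x u - x v) ^ 2 :=
      mul_pos (mul_pos (hw u) (neg_pos.mpr huv)) (sq_pos_of_ne_zero (sub_ne_zero.mpr hxuv))
    have hrow_pos := Finset.sum_pos' (fun j _ => hedge_nonneg u j) ⟨v, Finset.mem_univ v, hterm⟩
    have := Finset.sum_pos' (fun i _ => Finset.sum_nonneg fun j _ => hedge_nonneg i j)
      ⟨u, Finset.mem_univ u, hrow_pos⟩
    linarith
  · have hterm : 0 < w j * g j * x j ^ 2 := mul_pos (mul_pos (hw j) hgj) (sq_pos_of_ne_zero hxj)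
    have := Finset.sum_pos' (fun i _ => hpin_nonneg i) ⟨j, Finset.mem_univ j, hterm⟩
    linarith

/-- For the graph Laplacian `L` of a strongly connected weighted directed graph, a positive
left null vector `w` of `L`, `W = diag w`, and a pinning-gain matrix `G = diag g` with
`g i ≥ 0` for all `i` and `g i > 0` for at least one `i`, the symmetric matrix
`W (L + G) + (L + G)ᵀ W` is positive definite. -/
theorem pinned_laplacian_W_posDef
    (n : ℕ) (a : Fin n → Fin n → ℝ) (L : Matrix (Fin n) (Fin n) ℝ)
    (hnn : ∀ i j, i ≠ j → 0 ≤ a i j)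
    (hdiag : ∀ i, L i i = ∑ j ∈ Finset.univ.erase i, a i j)
    (hoff : ∀ i j, i ≠ j → L i j = -a i j)
    (hsc : ∀ i j : Fin n, i ≠ j → Relation.TransGen (fun u v => 0 < a u v) i j)
    (w : Fin n → ℝ) (hw : ∀ i, 0 < w i) (hwL : Matrix.vecMul w L = 0)
    (g : Fin n → ℝ) (hg : ∀ i, 0 ≤ g i) (hg' : ∃ i, 0 < g i) :
    (Matrix.diagonal w * (L + Matrix.diagonal g)
        + (L + Matrix.diagonal g)ᵀ * Matrix.diagonal w).PosDef := by
  have hoffDiag : ∀ i j, i ≠ j → L i j ≤ 0 := fun i j hij => by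
    rw [hoff i j hij, neg_nonpos]
    exact hnn i j hij
  have hrow : ∀ i, ∑ j, L i j = 0 := fun i => by
    rw [← Finset.add_sum_erase _ _ (Finset.mem_univ i), hdiag i, ← sub_neg_eq_add,
      ← Finset.sum_neg_distrib, sub_eq_zero]
    exact Finset.sum_congr rfl fun j hj => by
      rw [hoff i j (Finset.ne_of_mem_erase hj).symm, neg_neg]
  -- `a u u` does not enter `L`, so a positive self-loop weight only yields a reflexive step.
  have hedge : ∀ u v, 0 < a u v → Relation.ReflGen (fun u v => L u v < 0) u v := by
    intro u v huv
    rcases eq_or_ne u v with rfl | huv'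
    · exact Relation.ReflGen.refl
    · exact Relation.ReflGen.single (by rw [hoff u v huv']; linarith)
  obtain ⟨p, hgp⟩ := hg'
  refine posDef_diagonal_mul_add_transpose_mul_diagonal L hoffDiag hrow hwL hw hg
    fun i => ⟨p, hgp, ?_⟩
  rcases eq_or_ne i p with rfl | hip
  · exact Relation.ReflTransGen.refl
  · rw [← Relation.reflTransGen_reflGen]
    exact Relation.ReflTransGen.mono hedge _ _ (hsc i p hip).to_reflTransGen
end

section
/- Let L ∈ ℝ^{n×n} be the graph Laplacian of a strongly connected weighted directed graph on n nodes, let w be a vector with all entries strictly positive satisfying wᵀL = 0, set W = diag(w), and let G = diag(g_1,…,g_n) with g_i ≥ 0 for all i and g_i > 0 for at least one i. Then the matrix A = L + G is nonsingular and the symmetric matrix (L+G)ᵀW(L+G) is positive definite. -/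
/-!
If `(L + G) x = 0`, every row reads `(∑ⱼ a i j + g i) x i = ∑ⱼ a i j x j` with nonnegative
weights, which gives a discrete maximum principle: at a node where `|x|` attains a nonzero
maximum, `g i = 0` and `|x|` takes the same maximal value at every out-neighbour. By strong
connectivity a nonzero maximum of `|x|` would be attained everywhere, contradicting `g k > 0`
at a pinned node; so `x = 0`. Injectivity of `L + G` then gives both its nonsingularity and,
since `W` is positive definite, the positive definiteness of `(L + G)ᵀ W (L + G)`.
-/

open Matrix Finset

variable {ι : Type*} [Fintype ι] [DecidableEq ι]

lemma maximum_principle_of_balance {a : ι → ι → ℝ} {g x : ι → ℝ} {i : ι}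
    (ha : ∀ j, j ≠ i → 0 ≤ a i j) (hg : 0 ≤ g i)
    (hbal : (∑ j ∈ univ.erase i, a i j + g i) * x i = ∑ j ∈ univ.erase i, a i j * x j)
    (hmax : ∀ j, |x j| ≤ |x i|) (hxi : x i ≠ 0) :
    g i = 0 ∧ ∀ j, 0 < a i j → |x j| = |x i| := by
  have ha' : ∀ j ∈ univ.erase i, 0 ≤ a i j := fun j hj => ha j (ne_of_mem_erase hj)
  have hterm_le : ∀ j ∈ univ.erase i, a i j * |x j| ≤ a i j * |x i| := fun j hj =>
    mul_le_mul_of_nonneg_left (hmax j) (ha' j hj)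
  have hlower : (∑ j ∈ univ.erase i, a i j + g i) * |x i| ≤
      ∑ j ∈ univ.erase i, a i j * |x j| :=
    calc (∑ j ∈ univ.erase i, a i j + g i) * |x i|
        = |∑ j ∈ univ.erase i, a i j * x j| := by
          rw [← hbal, abs_mul, abs_of_nonneg (add_nonneg (sum_nonneg ha') hg)]
      _ ≤ ∑ j ∈ univ.erase i, |a i j * x j| := abs_sum_le_sum_abs _ _
      _ = ∑ j ∈ univ.erase i, a i j * |x j| := sum_congr rfl fun j hj => by
          rw [abs_mul, abs_of_nonneg (ha' j hj)]
  have hupper : ∑ j ∈ univ.erase i, a i j * |x j| ≤ (∑ j ∈ univ.erase i, a i j) * |x i| := by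
    rw [sum_mul]
    exact sum_le_sum hterm_le
  have hxi_pos : 0 < |x i| := abs_pos.mpr hxi
  refine ⟨by nlinarith, fun j haj => ?_⟩
  obtain rfl | hji := eq_or_ne j i
  · rfl
  have hsum_eq : ∑ j ∈ univ.erase i, a i j * |x j| = ∑ j ∈ univ.erase i, a i j * |x i| := by
    rw [← sum_mul]
    nlinarith
  exact mul_left_cancel₀ haj.ne'
    ((sum_eq_sum_iff_of_le hterm_le).mp hsum_eq j (mem_erase.mpr ⟨hji, mem_univ j⟩))

lemma eq_zero_of_balance {a : ι → ι → ℝ} {g x : ι → ℝ}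
    (ha : ∀ i j, i ≠ j → 0 ≤ a i j)
    (hsc : ∀ i j, i ≠ j → Relation.TransGen (fun u v => 0 < a u v) i j)
    (hg : ∀ i, 0 ≤ g i) (hg' : ∃ i, 0 < g i)
    (hbal : ∀ i, (∑ j ∈ univ.erase i, a i j + g i) * x i = ∑ j ∈ univ.erase i, a i j * x j) :
    x = 0 := by
  by_contra hx
  obtain ⟨k, hk⟩ := hg'
  obtain ⟨i₀, -, hi₀⟩ := exists_max_image univ (fun i => |x i|) ⟨k, mem_univ k⟩
  obtain ⟨i, hi⟩ := Function.ne_iff.mp hx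
  have hm : 0 < |x i₀| := (abs_pos.mpr hi).trans_le (hi₀ i (mem_univ i))
  have hstep : ∀ u, |x u| = |x i₀| → g u = 0 ∧ ∀ v, 0 < a u v → |x v| = |x i₀| := by
    intro u hu
    rw [← hu]
    exact maximum_principle_of_balance (fun j hj => ha u j hj.symm) (hg u) (hbal u)
      (fun j => hu ▸ hi₀ j (mem_univ j)) (abs_pos.mp (hu ▸ hm))
  have hall : ∀ v, |x v| = |x i₀| := by
    intro v
    obtain rfl | hv := eq_or_ne v i₀
    · rfl
    exact (Relation.transGen_swap.mpr (hsc i₀ v hv.symm)).closed'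
      (fun huv hu => (hstep _ hu).2 _ huv) rfl
  exact hk.ne' (hstep k (hall k)).1

lemma laplacian_add_diagonal_mulVec_apply {a : ι → ι → ℝ} {L : Matrix ι ι ℝ}
    (hdiag : ∀ i, L i i = ∑ j ∈ univ.erase i, a i j)
    (hoff : ∀ i j, i ≠ j → L i j = -a i j) (g x : ι → ℝ) (i : ι) :
    ((L + diagonal g) *ᵥ x) i =
      (∑ j ∈ univ.erase i, a i j + g i) * x i - ∑ j ∈ univ.erase i, a i j * x j := by
  have hoff_sum : ∑ j ∈ univ.erase i, L i j * x j = -∑ j ∈ univ.erase i, a i j * x j := by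
    rw [← sum_neg_distrib]
    exact sum_congr rfl fun j hj => by rw [hoff i j (ne_of_mem_erase hj).symm, neg_mul]
  rw [add_mulVec, Pi.add_apply, mulVec_diagonal, mulVec, dotProduct,
    ← add_sum_erase _ _ (mem_univ i), hoff_sum, hdiag]
  ring

lemma injective_laplacian_add_diagonal_mulVec {a : ι → ι → ℝ} {L : Matrix ι ι ℝ}
    (ha : ∀ i j, i ≠ j → 0 ≤ a i j)
    (hdiag : ∀ i, L i i = ∑ j ∈ univ.erase i, a i j)
    (hoff : ∀ i j, i ≠ j → L i j = -a i j)
    (hsc : ∀ i j, i ≠ j → Relation.TransGen (fun u v => 0 < a u v) i j)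
    {g : ι → ℝ} (hg : ∀ i, 0 ≤ g i) (hg' : ∃ i, 0 < g i) :
    Function.Injective (L + diagonal g).mulVec := by
  intro x y hxy
  rw [← sub_eq_zero]
  refine eq_zero_of_balance ha hsc hg hg' fun i => ?_
  have hi := congrFun (show (L + diagonal g) *ᵥ (x - y) = 0 by rw [mulVec_sub, hxy, sub_self]) i
  rw [laplacian_add_diagonal_mulVec_apply hdiag hoff, Pi.zero_apply] at hi
  exact sub_eq_zero.mp hi

theorem pinned_laplacian_nonsingular_and_AtWA_posDef_general
    (n : ℕ) (a : Fin n → Fin n → ℝ) (L : Matrix (Fin n) (Fin n) ℝ)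
    (hnn : ∀ i j, i ≠ j → 0 ≤ a i j)
    (hdiag : ∀ i, L i i = ∑ j ∈ Finset.univ.erase i, a i j)
    (hoff : ∀ i j, i ≠ j → L i j = -a i j)
    (hsc : ∀ i j : Fin n, i ≠ j → Relation.TransGen (fun u v => 0 < a u v) i j)
    (w : Fin n → ℝ) (hw : ∀ i, 0 < w i)
    (g : Fin n → ℝ) (hg : ∀ i, 0 ≤ g i) (hg' : ∃ i, 0 < g i) :
    (L + Matrix.diagonal g).det ≠ 0 ∧
      ((L + Matrix.diagonal g)ᵀ * Matrix.diagonal w * (L + Matrix.diagonal g)).PosDef := by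
  have hinj := injective_laplacian_add_diagonal_mulVec hnn hdiag hoff hsc hg hg'
  exact ⟨((isUnit_iff_isUnit_det _).mp (mulVec_injective_iff_isUnit.mp hinj)).ne_zero,
    (PosDef.diagonal hw).conjTranspose_mul_mul_same hinj⟩

/-- For the graph Laplacian `L` of a strongly connected weighted directed graph, a positive
left null vector `w` of `L`, `W = diag w`, and a pinning-gain matrix `G = diag g` with
`g i ≥ 0` for all `i` and `g i > 0` for at least one `i`, the matrix `A = L + G` is
nonsingular and the symmetric matrix `(L + G)ᵀ W (L + G)` is positive definite. -/
theorem pinned_laplacian_nonsingular_and_AtWA_posDef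
    (n : ℕ) (a : Fin n → Fin n → ℝ) (L : Matrix (Fin n) (Fin n) ℝ)
    (hnn : ∀ i j, i ≠ j → 0 ≤ a i j)
    (hdiag : ∀ i, L i i = ∑ j ∈ Finset.univ.erase i, a i j)
    (hoff : ∀ i j, i ≠ j → L i j = -a i j)
    (hsc : ∀ i j : Fin n, i ≠ j → Relation.TransGen (fun u v => 0 < a u v) i j)
    (w : Fin n → ℝ) (hw : ∀ i, 0 < w i) (hwL : Matrix.vecMul w L = 0)
    (g : Fin n → ℝ) (hg : ∀ i, 0 ≤ g i) (hg' : ∃ i, 0 < g i) :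
    (L + Matrix.diagonal g).det ≠ 0 ∧
      ((L + Matrix.diagonal g)ᵀ * Matrix.diagonal w * (L + Matrix.diagonal g)).PosDef :=
  pinned_laplacian_nonsingular_and_AtWA_posDef_general n a L hnn hdiag hoff hsc w hw g hg hg'
end
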